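/- Let n = 4k for k ≥ 1 and let G = ⟨x, y | x^{4k} = y², x^{8k} = 1, y⁻¹xy = x⁻¹⟩ be the generalized quaternion group of order 16k. The group with presentation ⟨x, y | x^{4k} = y², x^{8k} = 1, y⁻¹xy = x⁻¹, y^{4k} = x², y^{8k} = 1, x⁻¹yx = y⁻¹⟩ is isomorphic to the Klein four-group ⟨x, y | x² = y² = (xy)² = 1⟩. -/

import Mathlib

/-- Relators of the symmetrized generalized quaternion presentation
`⟨x, y | x^{4k} = y², x^{8k} = 1, y⁻¹xy = x⁻¹, y^{4k} = x², y^{8k} = 1, x⁻¹yx = y⁻¹⟩`,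
with generator `0` for `x` and `1` for `y`. -/
def symQuatRels (k : ℕ) : Set (FreeGroup (Fin 2)) :=
  {FreeGroup.of 0 ^ (4 * k) * (FreeGroup.of 1 ^ 2)⁻¹,
   FreeGroup.of 0 ^ (8 * k),
   (FreeGroup.of 1)⁻¹ * FreeGroup.of 0 * FreeGroup.of 1 * FreeGroup.of 0,
   FreeGroup.of 1 ^ (4 * k) * (FreeGroup.of 0 ^ 2)⁻¹,
   FreeGroup.of 1 ^ (8 * k),
   (FreeGroup.of 0)⁻¹ * FreeGroup.of 1 * FreeGroup.of 0 * FreeGroup.of 1}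

/-- Relators of the Klein four-group `⟨x, y | x² = y² = (xy)² = 1⟩`. -/
def kleinRels : Set (FreeGroup (Fin 2)) :=
  {FreeGroup.of 0 ^ 2, FreeGroup.of 1 ^ 2, (FreeGroup.of 0 * FreeGroup.of 1) ^ 2}

lemma rel_eq_one {rels : Set (FreeGroup (Fin 2))} {r : FreeGroup (Fin 2)} (h : r ∈ rels) :
    (QuotientGroup.mk r : PresentedGroup rels) = 1 :=
  (QuotientGroup.eq_one_iff r).mpr (Subgroup.subset_normalClosure h)

section
variable (k : ℕ)

local notation "X" => (PresentedGroup.of (0 : Fin 2) : PresentedGroup (symQuatRels k))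
local notation "Y" => (PresentedGroup.of (1 : Fin 2) : PresentedGroup (symQuatRels k))

lemma q1 : X ^ (4 * k) * (Y ^ 2)⁻¹ = 1 := by
  have := rel_eq_one (rels := symQuatRels k)
    (r := FreeGroup.of 0 ^ (4 * k) * (FreeGroup.of 1 ^ 2)⁻¹) (by simp [symQuatRels])
  simp at this; exact this

lemma q2 : X ^ (8 * k) = 1 := by
  have := rel_eq_one (rels := symQuatRels k)
    (r := FreeGroup.of 0 ^ (8 * k)) (by simp [symQuatRels])
  simp at this; exact this

lemma q4 : Y ^ (4 * k) * (X ^ 2)⁻¹ = 1 := by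
  have := rel_eq_one (rels := symQuatRels k)
    (r := FreeGroup.of 1 ^ (4 * k) * (FreeGroup.of 0 ^ 2)⁻¹) (by simp [symQuatRels])
  simp at this; exact this

lemma q6 : X⁻¹ * Y * X * Y = 1 := by
  have := rel_eq_one (rels := symQuatRels k)
    (r := (FreeGroup.of 0)⁻¹ * FreeGroup.of 1 * FreeGroup.of 0 * FreeGroup.of 1)
    (by simp [symQuatRels])
  simp at this; exact this

lemma qx2 : X ^ 2 = 1 := by
  have h1 : X ^ (4 * k) = Y ^ 2 := mul_inv_eq_one.mp (q1 k)
  have h4 : Y ^ (4 * k) = X ^ 2 := mul_inv_eq_one.mp (q4 k)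
  have : X ^ 2 = (X ^ (8 * k)) ^ k := by
    rw [← h4]
    have e1 : Y ^ (4 * k) = (Y ^ 2) ^ (2 * k) := by rw [← pow_mul]; ring_nf
    rw [e1, ← h1, ← pow_mul, ← pow_mul]
    ring_nf
  rw [this, q2, one_pow]

lemma qy2 : Y ^ 2 = 1 := by
  have h1 : X ^ (4 * k) = Y ^ 2 := mul_inv_eq_one.mp (q1 k)
  rw [← h1, show 4 * k = 2 * (2 * k) by ring, pow_mul, qx2, one_pow]

lemma qxy2 : (X * Y) ^ 2 = 1 := by
  have h := q6 k
  have hx : X⁻¹ = X := by rw [inv_eq_iff_mul_eq_one, ← pow_two]; exact qx2 k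
  rw [hx] at h
  rw [pow_two, ← mul_assoc]
  exact h

end

section
local notation "A" => (PresentedGroup.of (0 : Fin 2) : PresentedGroup kleinRels)
local notation "B" => (PresentedGroup.of (1 : Fin 2) : PresentedGroup kleinRels)

lemma ka : A ^ 2 = 1 := by
  have := rel_eq_one (rels := kleinRels) (r := FreeGroup.of 0 ^ 2) (by simp [kleinRels])
  simp at this; exact this

lemma kb : B ^ 2 = 1 := by
  have := rel_eq_one (rels := kleinRels) (r := FreeGroup.of 1 ^ 2) (by simp [kleinRels])
  simp at this; exact this

lemma kab : (A * B) ^ 2 = 1 := by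
  have := rel_eq_one (rels := kleinRels)
    (r := (FreeGroup.of 0 * FreeGroup.of 1) ^ 2) (by simp [kleinRels])
  simp at this; exact this

lemma kcomm : A * B = B * A := by
  have hAi : A⁻¹ = A := by rw [inv_eq_iff_mul_eq_one, ← pow_two]; exact ka
  have hBi : B⁻¹ = B := by rw [inv_eq_iff_mul_eq_one, ← pow_two]; exact kb
  have h : (A * B)⁻¹ = A * B := by rw [inv_eq_iff_mul_eq_one, ← pow_two]; exact kab
  calc A * B = (A * B)⁻¹ := h.symm
    _ = B⁻¹ * A⁻¹ := by rw [mul_inv_rev]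
    _ = B * A := by rw [hAi, hBi]

lemma krel3 : B⁻¹ * A * B * A = 1 := by
  have hBi : B⁻¹ = B := by rw [inv_eq_iff_mul_eq_one, ← pow_two]; exact kb
  rw [hBi]
  calc B * A * B * A = B * (A * B) * A := by rw [mul_assoc B]
    _ = B * (B * A) * A := by rw [kcomm]
    _ = B ^ 2 * A ^ 2 := by simp [pow_two, mul_assoc]
    _ = 1 := by rw [ka, kb, one_mul]

lemma krel6 : A⁻¹ * B * A * B = 1 := by
  have hAi : A⁻¹ = A := by rw [inv_eq_iff_mul_eq_one, ← pow_two]; exact ka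
  rw [hAi]
  calc A * B * A * B = A * (B * A) * B := by rw [mul_assoc A]
    _ = A * (A * B) * B := by rw [← kcomm]
    _ = A ^ 2 * B ^ 2 := by simp [pow_two, mul_assoc]
    _ = 1 := by rw [ka, kb, one_mul]

end

/-- For `n = 4k`, `k ≥ 1`, the quotient of the generalized quaternion group of order
`16k` obtained by symmetrizing its presentation under the swap of `x` and `y` is the
Klein four-group. -/
theorem stmt_10 (k : ℕ) (hk : 1 ≤ k) :
    Nonempty (PresentedGroup (symQuatRels k) ≃* PresentedGroup kleinRels) := by
  have hf : ∀ r ∈ symQuatRels k,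
      FreeGroup.lift (fun i : Fin 2 =>
        if i = 0 then (PresentedGroup.of 0 : PresentedGroup kleinRels)
        else PresentedGroup.of 1) r = 1 := by
    intro r hr
    rcases hr with h | h | h | h | h | h <;> subst h <;>
      simp only [map_mul, map_pow, map_inv, FreeGroup.lift_apply_of, if_pos rfl] <;> norm_num
    · rw [show 4 * k = 2 * (2 * k) by ring, pow_mul, ka, one_pow, kb]; simp
    · rw [show 8 * k = 2 * (4 * k) by ring, pow_mul, ka, one_pow]
    · exact krel3
    · rw [show 4 * k = 2 * (2 * k) by ring, pow_mul, kb, one_pow, ka]; simp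
    · rw [show 8 * k = 2 * (4 * k) by ring, pow_mul, kb, one_pow]
    · exact krel6
  have hg : ∀ r ∈ kleinRels,
      FreeGroup.lift (fun i : Fin 2 =>
        if i = 0 then (PresentedGroup.of 0 : PresentedGroup (symQuatRels k))
        else PresentedGroup.of 1) r = 1 := by
    intro r hr
    rcases hr with h | h | h <;> subst h <;>
      simp only [map_mul, map_pow, FreeGroup.lift_apply_of, if_pos rfl] <;> norm_num
    · exact qx2 k
    · exact qy2 k
    · exact qxy2 k
  refine ⟨MonoidHom.toMulEquiv (PresentedGroup.toGroup hf) (PresentedGroup.toGroup hg) ?_ ?_⟩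
  · apply PresentedGroup.ext
    intro x
    fin_cases x <;> simp [PresentedGroup.toGroup.of]
  · apply PresentedGroup.ext
    intro x
    fin_cases x <;> simp [PresentedGroup.toGroup.of]
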